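/- arXiv:1312.5838 — 3 statements merged into one kernel-verified Lean document; each statement's English description precedes it below -/
import Mathlib

section
/- Let p₁,…,pₙ be positive integers, and let L(p̄) be the abelian group generated by elements x₁,…,xₙ modulo the relations pᵢxᵢ = p₁x₁ for all i ≥ 2, and set c = p₁x₁. Then the quotient L(p̄)/ℤc is isomorphic to the direct sum ⊕ᵢ ℤ/pᵢℤ; in particular L(p̄) is a finitely generated abelian group of rank 1. -/
open FreeAbelianGroup

/-- The relation subgroup of the free abelian group on `Fin (n+1)` generated by the
elements `pᵢ • xᵢ - p₀ • x₀` (the relations `pᵢxᵢ = p₁x₁`). -/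
def relSubgroup (n : ℕ) (p : Fin (n + 1) → ℕ) : AddSubgroup (FreeAbelianGroup (Fin (n + 1))) :=
  AddSubgroup.closure {g | ∃ i : Fin (n + 1), g = (p i : ℤ) • of i - (p 0 : ℤ) • of 0}

/-- `L(p̄)`, the abelian group generated by `x₁, …, xₙ` modulo `pᵢxᵢ = p₁x₁`. -/
def Lgroup (n : ℕ) (p : Fin (n + 1) → ℕ) : Type :=
  FreeAbelianGroup (Fin (n + 1)) ⧸ relSubgroup n p

instance (n : ℕ) (p : Fin (n + 1) → ℕ) : AddCommGroup (Lgroup n p) :=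
  QuotientAddGroup.Quotient.addCommGroup _

/-- The image of `xᵢ` in `L(p̄)`. -/
def Lx (n : ℕ) (p : Fin (n + 1) → ℕ) (i : Fin (n + 1)) : Lgroup n p :=
  QuotientAddGroup.mk (of i)

/-- The element `c = p₁x₁` of `L(p̄)`. -/
def Lc (n : ℕ) (p : Fin (n + 1) → ℕ) : Lgroup n p := (p 0 : ℤ) • Lx n p 0

/-! Since `c = pᵢ xᵢ` for every `i`, the subgroup `ℤc` of `L(p̄)` is the image of the subgroup of
the free abelian group generated by all `pᵢ xᵢ`. By the third isomorphism theorem, `L(p̄)/ℤc` is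
therefore the free abelian group modulo `pᵢ xᵢ = 0`, which is `⨁ ℤ/pᵢ` by comparing universal
properties. Finite generation is inherited from the free abelian group on finitely many
generators. -/

open DirectSum

namespace FreeAbelianGroup

variable {ι : Type*} (p : ι → ℕ)

def cyclicRelations : AddSubgroup (FreeAbelianGroup ι) :=
  AddSubgroup.closure (Set.range fun i => (p i : ℤ) • of i)

variable [DecidableEq ι]

def toDirectSumZMod : FreeAbelianGroup ι ⧸ cyclicRelations p →+ ⨁ i, ZMod (p i) :=
  QuotientAddGroup.lift _ (lift fun i => DirectSum.of (fun i => ZMod (p i)) i 1) <| by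
    rw [cyclicRelations, AddSubgroup.closure_le]
    rintro _ ⟨i, rfl⟩
    rw [SetLike.mem_coe, AddMonoidHom.mem_ker, map_zsmul, lift_apply_of, ← map_zsmul, zsmul_one,
      Int.cast_natCast, ZMod.natCast_self, map_zero]

def ofDirectSumZMod : (⨁ i, ZMod (p i)) →+ FreeAbelianGroup ι ⧸ cyclicRelations p :=
  DirectSum.toAddMonoid fun i => ZMod.lift (p i)
    ⟨zmultiplesHom _ (QuotientAddGroup.mk (of i)), by
      rw [zmultiplesHom_apply, ← QuotientAddGroup.mk_zsmul, QuotientAddGroup.eq_zero_iff]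
      exact AddSubgroup.subset_closure (Set.mem_range_self i)⟩

def quotientCyclicRelationsEquiv : FreeAbelianGroup ι ⧸ cyclicRelations p ≃+ ⨁ i, ZMod (p i) :=
  AddMonoidHom.toAddEquiv (toDirectSumZMod p) (ofDirectSumZMod p)
    (by
      refine QuotientAddGroup.addMonoidHom_ext _ (lift_ext _ _ fun i => ?_)
      simp only [toDirectSumZMod, ofDirectSumZMod, AddMonoidHom.comp_apply,
        QuotientAddGroup.mk'_apply, QuotientAddGroup.lift_mk, lift_apply_of, toAddMonoid_of]
      rw [← Int.cast_one, ZMod.lift_coe, zmultiplesHom_apply, one_zsmul, AddMonoidHom.id_apply])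
    (by
      refine DirectSum.addHom_ext fun i y => ?_
      obtain ⟨m, rfl⟩ := ZMod.intCast_surjective y
      simp only [toDirectSumZMod, ofDirectSumZMod, AddMonoidHom.comp_apply, toAddMonoid_of,
        ZMod.lift_coe, zmultiplesHom_apply, map_zsmul, QuotientAddGroup.lift_mk, lift_apply_of,
        AddMonoidHom.id_apply]
      rw [← map_zsmul, zsmul_one])

end FreeAbelianGroup

section Lgroup

variable (n : ℕ) (p : Fin (n + 1) → ℕ)

theorem smul_Lx_eq_Lc (i : Fin (n + 1)) : (p i : ℤ) • Lx n p i = Lc n p :=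
  QuotientAddGroup.eq_iff_sub_mem.2 (AddSubgroup.subset_closure ⟨i, rfl⟩)

theorem relSubgroup_le_cyclicRelations : relSubgroup n p ≤ cyclicRelations p := by
  rw [relSubgroup, AddSubgroup.closure_le]
  rintro _ ⟨i, rfl⟩
  exact sub_mem (AddSubgroup.subset_closure ⟨i, rfl⟩) (AddSubgroup.subset_closure ⟨0, rfl⟩)

theorem map_cyclicRelations_eq_zmultiples_Lc :
    (cyclicRelations p).map (QuotientAddGroup.mk' (relSubgroup n p)) =
      AddSubgroup.zmultiples (Lc n p) := by
  rw [cyclicRelations, AddMonoidHom.map_closure, ← Set.range_comp,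
    AddSubgroup.zmultiples_eq_closure, ← Set.range_const (ι := Fin (n + 1))]
  exact congrArg _ (congrArg _ (funext (smul_Lx_eq_Lc n p)))

theorem nonempty_quotient_zmultiples_Lc_addEquiv :
    Nonempty (Lgroup n p ⧸ AddSubgroup.zmultiples (Lc n p) ≃+ ⨁ i, ZMod (p i)) := by
  rw [← map_cyclicRelations_eq_zmultiples_Lc]
  exact ⟨(QuotientAddGroup.quotientQuotientEquivQuotient _ _
    (relSubgroup_le_cyclicRelations n p)).trans (quotientCyclicRelationsEquiv p)⟩

instance : AddGroup.FG (Lgroup n p) :=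
  have : AddGroup.FG (FreeAbelianGroup (Fin (n + 1))) :=
    AddGroup.fg_iff_addMonoid_fg.2 inferInstance
  inferInstanceAs (AddGroup.FG (FreeAbelianGroup (Fin (n + 1)) ⧸ relSubgroup n p))

end Lgroup

theorem Lgroup_quotient_zmultiples_c_and_fg_general (n : ℕ) (p : Fin (n + 1) → ℕ) :
    Nonempty ((Lgroup n p ⧸ AddSubgroup.zmultiples (Lc n p)) ≃+
        DirectSum (Fin (n + 1)) (fun i => ZMod (p i)))
      ∧ AddGroup.FG (Lgroup n p) :=
  ⟨nonempty_quotient_zmultiples_Lc_addEquiv n p, inferInstance⟩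

theorem Lgroup_quotient_zmultiples_c_and_fg (n : ℕ) (p : Fin (n + 1) → ℕ)
    (hp : ∀ i, 0 < p i) :
    Nonempty ((Lgroup n p ⧸ AddSubgroup.zmultiples (Lc n p)) ≃+
        DirectSum (Fin (n + 1)) (fun i => ZMod (p i)))
      ∧ AddGroup.FG (Lgroup n p) :=
  Lgroup_quotient_zmultiples_c_and_fg_general n p
end

section
/- Every element of the group L(p̄) can be written uniquely in the form l₀·c + Σᵢ lᵢ·xᵢ with l₀ ∈ ℤ and integers lᵢ satisfying 0 ≤ lᵢ < pᵢ for each i. -/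
open FreeAbelianGroup

/-! Existence: divide each coefficient `aᵢ` of `∑ aᵢ xᵢ` by `pᵢ` with remainder and use
`pᵢ xᵢ = c`. Uniqueness: the homomorphism `L(p̄) → ℤ/pⱼ` sending `xᵢ` to `δᵢⱼ` kills `c` and reads
off `lⱼ` modulo `pⱼ`, and the homomorphism `L(p̄) → ℤ` sending `xᵢ` to `∏_{k ≠ i} pₖ` sends `c` to
`∏ₖ pₖ ≠ 0`, so `c` has infinite order. -/

namespace Lgroup

variable {n : ℕ} {p : Fin (n + 1) → ℕ}

noncomputable def lift {A : Type*} [AddCommGroup A] (f : Fin (n + 1) → A)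
    (hf : ∀ i, (p i : ℤ) • f i = (p 0 : ℤ) • f 0) : Lgroup n p →+ A :=
  QuotientAddGroup.lift (relSubgroup n p) (FreeAbelianGroup.lift f) <| by
    rw [relSubgroup, AddSubgroup.closure_le]
    rintro g ⟨i, rfl⟩
    simp only [SetLike.mem_coe, AddMonoidHom.mem_ker, map_sub, map_zsmul, lift_apply_of, hf i,
      sub_self]

@[simp]
lemma lift_Lx {A : Type*} [AddCommGroup A] (f : Fin (n + 1) → A)
    (hf : ∀ i, (p i : ℤ) • f i = (p 0 : ℤ) • f 0) (i : Fin (n + 1)) :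
    lift f hf (Lx n p i) = f i :=
  lift_apply_of f i

lemma zsmul_Lx (i : Fin (n + 1)) : (p i : ℤ) • Lx n p i = Lc n p := by
  rw [Lc, ← sub_eq_zero]
  change QuotientAddGroup.mk ((p i : ℤ) • of i - (p 0 : ℤ) • of 0) =
    (0 : FreeAbelianGroup (Fin (n + 1)) ⧸ relSubgroup n p)
  rw [QuotientAddGroup.eq_zero_iff]
  exact AddSubgroup.subset_closure ⟨i, rfl⟩

lemma mk_eq_sum_coeff_zsmul_Lx (z : FreeAbelianGroup (Fin (n + 1))) :
    (QuotientAddGroup.mk z : Lgroup n p) = ∑ i, coeff i z • Lx n p i := by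
  conv_lhs => rw [eq_sum_support_coeff_smul_of z]
  rw [QuotientAddGroup.mk_sum]
  refine Finset.sum_subset (Finset.subset_univ _) fun i _ hi => ?_
  rw [QuotientAddGroup.mk_zsmul, (notMem_support_iff i z).mp hi]
  exact zero_smul ℤ (Lx n p i)

lemma exists_eq_sum_zsmul_Lx (y : Lgroup n p) :
    ∃ a : Fin (n + 1) → ℤ, y = ∑ i, a i • Lx n p i := by
  obtain ⟨z, rfl⟩ := QuotientAddGroup.mk_surjective y
  exact ⟨fun i => coeff i z, mk_eq_sum_coeff_zsmul_Lx z⟩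

lemma sum_zsmul_Lx_eq (a : Fin (n + 1) → ℤ) :
    ∑ i, a i • Lx n p i = (∑ i, a i / p i) • Lc n p + ∑ i, (a i % p i) • Lx n p i := by
  rw [Finset.sum_smul, ← Finset.sum_add_distrib]
  refine Finset.sum_congr rfl fun i _ => ?_
  rw [← zsmul_Lx i, smul_smul, ← add_smul, mul_comm, Int.mul_ediv_add_emod]

noncomputable def coordMod (j : Fin (n + 1)) : Lgroup n p →+ ZMod (p j) :=
  lift (Pi.single j 1) fun i => by
    have hvanish : ∀ k, (p k : ℤ) • (Pi.single j 1 : Fin (n + 1) → ZMod (p j)) k = 0 := fun k => by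
      rcases eq_or_ne k j with rfl | hk
      · simp
      · simp [hk]
    rw [hvanish, hvanish]

lemma coordMod_zsmul_Lc_add_sum (j : Fin (n + 1)) (m : ℤ) (l : Fin (n + 1) → ℤ) :
    coordMod j (m • Lc n p + ∑ i, l i • Lx n p i) = l j := by
  simp [coordMod, ← zsmul_Lx j, Pi.single_apply]

noncomputable def degree : Lgroup n p →+ ℤ :=
  lift (fun i => ∏ k ∈ Finset.univ.erase i, (p k : ℤ)) fun i => by
    simp only [smul_eq_mul, Finset.mul_prod_erase _ (fun k => (p k : ℤ)) (Finset.mem_univ _)]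

lemma degree_Lc : degree (Lc n p) = ∏ k, (p k : ℤ) := by
  rw [Lc, map_zsmul, degree, lift_Lx, smul_eq_mul,
    Finset.mul_prod_erase _ (fun k => (p k : ℤ)) (Finset.mem_univ _)]

lemma zsmul_Lc_injective (hp : ∀ i, p i ≠ 0) :
    Function.Injective (· • Lc n p : ℤ → Lgroup n p) := by
  intro m m' h
  have hprod : ∏ k, (p k : ℤ) ≠ 0 := Finset.prod_ne_zero_iff.mpr fun k _ => by exact_mod_cast hp k
  have := congrArg degree h
  simp only [map_zsmul, degree_Lc, smul_eq_mul] at this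
  exact mul_right_cancel₀ hprod this

lemma eq_of_zsmul_Lc_add_sum_eq {m m' : ℤ} {l l' : Fin (n + 1) → ℤ}
    (hl : ∀ i, 0 ≤ l i ∧ l i < p i) (hl' : ∀ i, 0 ≤ l' i ∧ l' i < p i)
    (h : m • Lc n p + ∑ i, l i • Lx n p i = m' • Lc n p + ∑ i, l' i • Lx n p i) :
    m = m' ∧ l = l' := by
  have hll' : l = l' := funext fun j => by
    have hj := congrArg (coordMod j) h
    rw [coordMod_zsmul_Lc_add_sum, coordMod_zsmul_Lc_add_sum, ZMod.intCast_eq_intCast_iff'] at hj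
    rwa [Int.emod_eq_of_lt (hl j).1 (hl j).2, Int.emod_eq_of_lt (hl' j).1 (hl' j).2] at hj
  subst hll'
  have hp : ∀ i, p i ≠ 0 := fun i => by have := hl i; omega
  exact ⟨zsmul_Lc_injective hp (add_right_cancel h), rfl⟩

end Lgroup

/-- Every element of `L(p̄)` is uniquely `l₀ • c + ∑ᵢ lᵢ • xᵢ` with `0 ≤ lᵢ < pᵢ`. -/
theorem Lgroup_normal_form (n : ℕ) (p : Fin (n + 1) → ℕ) (hp : ∀ i, 0 < p i)
    (y : Lgroup n p) :
    ∃! q : ℤ × (Fin (n + 1) → ℤ),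
      (∀ i, 0 ≤ q.2 i ∧ q.2 i < (p i : ℤ)) ∧
        y = q.1 • Lc n p + ∑ i : Fin (n + 1), q.2 i • Lx n p i := by
  obtain ⟨a, rfl⟩ := Lgroup.exists_eq_sum_zsmul_Lx y
  have hrem : ∀ i, 0 ≤ a i % p i ∧ a i % p i < p i := fun i => by
    have hpi : (0 : ℤ) < p i := by exact_mod_cast hp i
    exact ⟨Int.emod_nonneg _ hpi.ne', Int.emod_lt_of_pos _ hpi⟩
  refine ⟨(∑ i, a i / p i, fun i => a i % p i), ⟨hrem, Lgroup.sum_zsmul_Lx_eq a⟩, ?_⟩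
  rintro ⟨m, l⟩ ⟨hl, hy⟩
  obtain ⟨rfl, rfl⟩ :=
    Lgroup.eq_of_zsmul_Lc_add_sum_eq hl hrem (hy.symm.trans (Lgroup.sum_zsmul_Lx_eq a))
  rfl
end

section
/- Let 𝒜 be an abelian category, I an object, and 0 → I^s →^i F →^j G → 0 a short exact sequence. Let f : F → F′ be a morphism with i(I^s) ⊆ ker f. Suppose that there is no monomorphism I^{s+1} → ker f. Then for any morphism h′ : I → ker f such that the composite j ∘ h′ : I → G is a monomorphism, one obtains a contradiction; consequently, if moreover every h : I → G with values in a given subobject lifts along j to a morphism I → ker f, there is no monomorphism from I into j(ker f). Concretely: if h′ : I → ker f satisfies that h = j∘h′ is a monomorphism, then the map h″ = (h′, i) : I ⊕ I^s → ker f is a monomorphism. -/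
open CategoryTheory Abelian Limits

universe v u

/- A morphism `g` into `X ⊞ Y` killed by `(a, b)` has components `x, y` with `x a + y b = 0`;
composing with `j` kills `y b`, so `x (a j) = 0` and `x = 0`, and then `y b = 0` gives `y = 0`. -/
theorem mono_biprod_desc_of_mono_comp {C : Type u} [Category.{v} C] [Preadditive C]
    {X Y W Z : C} [HasBinaryBiproduct X Y] (a : X ⟶ W) (b : Y ⟶ W) (j : W ⟶ Z)
    [Mono b] (hbj : b ≫ j = 0) [Mono (a ≫ j)] : Mono (biprod.desc a b) := by
  refine Preadditive.mono_of_cancel_zero _ fun g hg => ?_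
  have hsum : (g ≫ biprod.fst) ≫ a + (g ≫ biprod.snd) ≫ b = 0 := by
    simpa [biprod.desc_eq, Preadditive.comp_add] using hg
  have hfst : g ≫ biprod.fst = 0 :=
    zero_of_comp_mono (a ≫ j) (by simpa [hbj] using congrArg (· ≫ j) hsum)
  have hsnd : g ≫ biprod.snd = 0 :=
    zero_of_comp_mono b (by simpa [hfst] using hsum)
  exact biprod.hom_ext _ _ (by simpa using hfst) (by simpa using hsnd)

theorem mono_into_kernel_of_mono_composition_general
    {C : Type u} [Category.{v} C] [Abelian C] [HasFiniteBiproducts C]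
    (I F G F' : C) (s : ℕ)
    (i : (⨁ fun _ : Fin s => I) ⟶ F) (j : F ⟶ G) (wij : i ≫ j = 0)
    (hS : (ShortComplex.mk i j wij).ShortExact)
    (f : F ⟶ F') (hif : i ≫ f = 0)
    (h' : I ⟶ F) (hh'f : h' ≫ f = 0) (hmono : Mono (h' ≫ j)) :
    Mono (biprod.desc h' i) ∧ biprod.desc h' i ≫ f = 0 := by
  have : Mono i := hS.mono_f
  exact ⟨mono_biprod_desc_of_mono_comp h' i j wij,
    biprod.hom_ext' _ _ (by simpa using hh'f) (by simpa using hif)⟩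

/-- Given a short exact sequence `0 → I^s →ⁱ F →ʲ G → 0` in an abelian category and
`f : F ⟶ F'` with `i(I^s) ⊆ ker f`, if `h' : I ⟶ F` satisfies `h' ≫ f = 0` (so `h'`
lands in `ker f`) and `h = j ∘ h'` is a monomorphism, then `h'' = (h', i) :
I ⊕ I^s ⟶ F` is a monomorphism, still landing in `ker f`. -/
theorem mono_into_kernel_of_mono_composition
    {C : Type u} [Category.{v} C] [Abelian C] [HasFiniteBiproducts C]
    [HasBinaryBiproducts C]
    (I F G F' : C) (s : ℕ)
    (i : (⨁ fun _ : Fin s => I) ⟶ F) (j : F ⟶ G) (wij : i ≫ j = 0)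
    (hS : (ShortComplex.mk i j wij).ShortExact)
    (f : F ⟶ F') (hif : i ≫ f = 0)
    (h' : I ⟶ F) (hh'f : h' ≫ f = 0) (hmono : Mono (h' ≫ j)) :
    Mono (biprod.desc h' i) ∧ biprod.desc h' i ≫ f = 0 :=
  mono_into_kernel_of_mono_composition_general I F G F' s i j wij hS f hif h' hh'f hmono
end
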